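/- arXiv:0910.4676 — 8 statements merged into one kernel-verified Lean document; each statement's English description precedes it below -/
import Mathlib

section
/- Let a(1) = 7 and, for n ≥ 2, a(n) = a(n-1) + gcd(n, a(n-1)). Then for every n ≥ 2, the difference a(n) - a(n-1) is either 1 or a prime number. -/
/-!
Write `a (r + j) = 3 r + j` for a "reset point" `r`, i.e. `a r = 3 r`. Then the next step adds
`gcd (r + j + 1) (3 r + j) = gcd (2 j + 3) (2 r - 1)`. As long as `2 i + 1` is coprime to `2 r - 1`
for all earlier `i`, the first odd number sharing a factor with `2 r - 1` is its least prime factor,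
so the step adds either `1` or the prime `2 j + 3`; in the latter case `a (r + j + 1) = 3 (r + j + 1)`
and the argument restarts. The sequence starting at `a 1 = 7` reaches its first reset point at `a 3 = 9`.
-/

theorem Nat.gcd_self_add_eq_of_two_mul_eq {s t q : ℕ} (hq : Odd q) (h : 2 * s = t + q) :
    Nat.gcd s (s + q) = Nat.gcd t q :=
  calc Nat.gcd s (s + q) = Nat.gcd s q := Nat.gcd_self_add_right s q
    _ = Nat.gcd (2 * s) q := (Nat.Coprime.gcd_mul_left_cancel s (Nat.coprime_two_left.2 hq)).symm
    _ = Nat.gcd t q := by rw [h, Nat.gcd_add_self_left]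

theorem Nat.coprime_or_prime_dvd_of_forall_lt {k q : ℕ}
    (h : ∀ i < k, Nat.Coprime (2 * i + 1) q) :
    Nat.Coprime (2 * k + 1) q ∨ (Nat.Prime (2 * k + 1) ∧ 2 * k + 1 ∣ q) := by
  refine or_iff_not_imp_left.2 fun hk => ?_
  obtain ⟨p, hp, hpk, hpq⟩ := Nat.Prime.not_coprime_iff_dvd.1 hk
  obtain ⟨i, rfl⟩ := (Odd.of_dvd_nat (odd_two_mul_add_one k) hpk).exists_bit1
  have hki : k ≤ i := by
    by_contra! hik
    exact hp.one_lt.ne' ((h i hik).eq_one_of_dvd hpq)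
  have : 2 * i + 1 = 2 * k + 1 := le_antisymm (Nat.le_of_dvd (by omega) hpk) (by omega)
  exact this ▸ ⟨hp, hpq⟩

def IsRowlandState (a : ℕ → ℕ) (r j : ℕ) : Prop :=
  1 ≤ r ∧ a (r + j) = 3 * r + j ∧ ∀ i ≤ j, Nat.Coprime (2 * i + 1) (2 * r - 1)

namespace IsRowlandState

variable {a : ℕ → ℕ} {r j : ℕ}

theorem succ_eq (hrec : ∀ n, 2 ≤ n → a n = a (n - 1) + Nat.gcd n (a (n - 1)))
    (hs : IsRowlandState a r j) :
    a (r + j + 1) = a (r + j) + Nat.gcd (2 * (j + 1) + 1) (2 * r - 1) := by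
  obtain ⟨hr, ha, -⟩ := hs
  have hodd : Odd (2 * r - 1) := ⟨r - 1, by omega⟩
  have hgcd := Nat.gcd_self_add_eq_of_two_mul_eq (s := r + j + 1) (t := 2 * (j + 1) + 1) hodd
    (by omega)
  rw [hrec (r + j + 1) (by omega), Nat.add_sub_cancel, ← hgcd, ha]
  congr 2
  omega

theorem next (hrec : ∀ n, 2 ≤ n → a n = a (n - 1) + Nat.gcd n (a (n - 1)))
    (hs : IsRowlandState a r j) :
    (a (r + j + 1) - a (r + j) = 1 ∧ IsRowlandState a r (j + 1)) ∨
      (Nat.Prime (a (r + j + 1) - a (r + j)) ∧ IsRowlandState a (r + j + 1) 0) := by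
  have hsucc := hs.succ_eq hrec
  obtain ⟨hr, ha, hcop⟩ := hs
  rcases Nat.coprime_or_prime_dvd_of_forall_lt (k := j + 1) fun i hi => hcop i (by omega) with
    hcoprime | ⟨hprime, hdvd⟩
  · rw [hcoprime.gcd_eq_one] at hsucc
    refine .inl ⟨by omega, hr, by rw [← add_assoc, hsucc, ha]; ring, fun i hi => ?_⟩
    rcases Nat.lt_or_eq_of_le hi with hi | rfl
    exacts [hcop i (by omega), hcoprime]
  · rw [Nat.gcd_eq_left hdvd] at hsucc
    refine .inr ⟨by rwa [hsucc, Nat.add_sub_cancel_left], by omega, ?_, fun i hi => ?_⟩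
    · rw [add_zero, hsucc, ha]
      ring
    · rw [Nat.le_zero.1 hi]
      exact Nat.coprime_one_left _

end IsRowlandState

theorem exists_isRowlandState {a : ℕ → ℕ}
    (hrec : ∀ n, 2 ≤ n → a n = a (n - 1) + Nat.gcd n (a (n - 1))) {n₀ : ℕ} (h₀ : a n₀ = 3 * n₀)
    (hn₀ : 1 ≤ n₀) {n : ℕ} (hn : n₀ ≤ n) : ∃ r j, r + j = n ∧ IsRowlandState a r j := by
  induction n, hn using Nat.le_induction with
  | base => exact ⟨n₀, 0, rfl, hn₀, by simpa using h₀, fun i hi => by simp [Nat.le_zero.1 hi]⟩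
  | succ n _ ih =>
    obtain ⟨r, j, rfl, hs⟩ := ih
    rcases hs.next hrec with ⟨-, hs'⟩ | ⟨-, hs'⟩
    exacts [⟨r, j + 1, rfl, hs'⟩, ⟨r + j + 1, 0, rfl, hs'⟩]

theorem rowland (a : ℕ → ℕ) (h1 : a 1 = 7)
    (hrec : ∀ n, 2 ≤ n → a n = a (n - 1) + Nat.gcd n (a (n - 1))) :
    ∀ n, 2 ≤ n → a n - a (n - 1) = 1 ∨ Nat.Prime (a n - a (n - 1)) := by
  have h2 : a 2 = 8 := by rw [hrec 2 le_rfl, h1]; rfl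
  have h3 : a 3 = 9 := by rw [hrec 3 (by norm_num), h2]; rfl
  intro n hn
  obtain rfl | rfl | h4 : n = 2 ∨ n = 3 ∨ 4 ≤ n := by omega
  · simp [h1, h2]
  · simp [h2, h3]
  obtain ⟨r, j, hrj, hs⟩ := exists_isRowlandState hrec h3 (by norm_num) (n := n - 1) (by omega)
  obtain rfl : n = r + j + 1 := by omega
  exact (hs.next hrec).imp And.left And.left
end

section
/- Let m ≥ 2 and let c(m-1) = t be such that p := gcd(m, t) is prime and t + p = 3m. Define c(n) = c(n-1) + gcd(n, c(n-1)) for n ≥ m. Then for every n ≥ m, the difference c(n) - c(n-1) is either 1 or a prime. -/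
/-! Call `s` a restart when `c s = 3 s`; the hypotheses make `m` one. Within the run started at `s`,
`c n = n + 2 s` as long as the increments are 1, so at `n = s + k` the next increment is
`gcd (n + 1) (2 s - 1) = gcd (2 s - 1) (2 k + 3)`. While the increments are 1, no prime below `2 k + 3`
divides the odd number `2 s - 1`; hence the first nontrivial increment is `2 k + 3` itself, a prime, and it
lands on `c (n + 1) = 3 (n + 1)`, a new restart. -/

theorem Nat.coprime_or_prime_dvd_of_le_minFac {x y : ℕ} (hy : 0 < y) (h : y ≤ x.minFac) :
    x.Coprime y ∨ (y.Prime ∧ y ∣ x) := by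
  refine or_iff_not_imp_left.2 fun hxy => ?_
  obtain ⟨p, hp, hpx, hpy⟩ := Nat.Prime.not_coprime_iff_dvd.1 hxy
  have hpy_eq : p = y :=
    le_antisymm (Nat.le_of_dvd hy hpy) (h.trans (Nat.minFac_le_of_dvd hp.two_le hpx))
  exact hpy_eq ▸ ⟨hp, hpx⟩

theorem Nat.gcd_add_succ_three_mul_add {s k : ℕ} (hs : 0 < s) :
    Nat.gcd (s + k + 1) (3 * s + k) = Nat.gcd (2 * s - 1) (2 * k + 3) := by
  have hodd : Nat.Coprime 2 (2 * s - 1) := by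
    rw [Nat.coprime_two_left]; exact ⟨s - 1, by omega⟩
  calc Nat.gcd (s + k + 1) (3 * s + k)
      = Nat.gcd (s + k + 1) (2 * s - 1 + (s + k + 1)) := by congr 1; omega
    _ = Nat.gcd (2 * (s + k + 1)) (2 * s - 1) := by
      rw [Nat.gcd_add_self_right, hodd.gcd_mul_left_cancel]
    _ = Nat.gcd (2 * k + 3 + (2 * s - 1)) (2 * s - 1) := by congr 1; omega
    _ = Nat.gcd (2 * s - 1) (2 * k + 3) := by rw [Nat.gcd_add_self_left, Nat.gcd_comm]

theorem Nat.three_le_minFac_two_mul_sub_one {s : ℕ} (hs : 2 ≤ s) : 3 ≤ (2 * s - 1).minFac := by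
  have hp := Nat.minFac_prime (n := 2 * s - 1) (by omega)
  have hne : (2 * s - 1).minFac ≠ 2 := fun h2 => by
    have := h2 ▸ Nat.minFac_dvd (2 * s - 1); omega
  have := hp.two_le
  omega

-- Index `s + k` lies `k` steps into the run that restarted at `s`.
def RowlandRun (c : ℕ → ℕ) (s k : ℕ) : Prop :=
  c (s + k) = 3 * s + k ∧ 2 * k + 3 ≤ (2 * s - 1).minFac

theorem rowlandRun_zero {c : ℕ → ℕ} {s : ℕ} (hs : 2 ≤ s) (hc : c s = 3 * s) :
    RowlandRun c s 0 :=
  ⟨hc, Nat.three_le_minFac_two_mul_sub_one hs⟩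

namespace RowlandRun

variable {c : ℕ → ℕ} {s k : ℕ}

theorem pos (h : RowlandRun c s k) : 0 < s :=
  Nat.pos_of_ne_zero fun hs => by simpa [hs] using h.2

theorem gcd_eq (h : RowlandRun c s k) :
    Nat.gcd (s + k + 1) (c (s + k)) = Nat.gcd (2 * s - 1) (2 * k + 3) := by
  rw [h.1, Nat.gcd_add_succ_three_mul_add h.pos]

theorem gcd_eq_one_or_prime (h : RowlandRun c s k) :
    Nat.gcd (s + k + 1) (c (s + k)) = 1 ∨ (Nat.gcd (s + k + 1) (c (s + k))).Prime := by
  rw [h.gcd_eq]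
  rcases Nat.coprime_or_prime_dvd_of_le_minFac (by omega) h.2 with hcop | ⟨hp, hdvd⟩
  · exact Or.inl hcop
  · exact Or.inr (by rwa [Nat.gcd_eq_right hdvd])

theorem succ (h : RowlandRun c s k)
    (hnext : c (s + k + 1) = c (s + k) + Nat.gcd (s + k + 1) (c (s + k))) :
    RowlandRun c s (k + 1) ∨ RowlandRun c (s + k + 1) 0 := by
  have hs := h.pos
  rw [h.gcd_eq] at hnext
  rcases Nat.coprime_or_prime_dvd_of_le_minFac (by omega) h.2 with hcop | ⟨-, hdvd⟩
  · left
    refine ⟨by rw [← add_assoc, hnext, hcop.gcd_eq_one, h.1]; ring, ?_⟩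
    have hmf := Nat.minFac_dvd (2 * s - 1)
    have hne : (2 * s - 1).minFac ≠ 2 * k + 3 := fun heq => by
      have := hcop.symm.eq_one_of_dvd (heq ▸ hmf)
      omega
    have hodd : (2 * s - 1).minFac ≠ 2 * k + 4 := fun heq => by
      have := (Dvd.intro (k + 2) (by omega) : 2 ∣ (2 * s - 1).minFac).trans hmf
      omega
    have := h.2
    omega
  · right
    refine rowlandRun_zero (by omega) ?_
    rw [hnext, h.1, Nat.gcd_eq_right hdvd]
    ring

end RowlandRun

theorem exists_rowlandRun {c : ℕ → ℕ} {m : ℕ} (hm : 2 ≤ m) (hcm : c m = 3 * m)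
    (hrec : ∀ n, m ≤ n → c n = c (n - 1) + Nat.gcd n (c (n - 1))) :
    ∀ n, m ≤ n → ∃ s k, s + k = n ∧ RowlandRun c s k := by
  intro n hn
  induction n, hn using Nat.le_induction with
  | base => exact ⟨m, 0, rfl, rowlandRun_zero hm hcm⟩
  | succ n hn ih =>
    obtain ⟨s, k, rfl, hrun⟩ := ih
    rcases hrun.succ (hrec _ (by omega)) with hrun' | hrun'
    · exact ⟨s, k + 1, by ring, hrun'⟩
    · exact ⟨s + k + 1, 0, rfl, hrun'⟩

theorem rowland_3m (m t : ℕ) (c : ℕ → ℕ) (hm : 2 ≤ m)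
    (hinit : c (m - 1) = t)
    (hp : Nat.Prime (Nat.gcd m t))
    (hsum : t + Nat.gcd m t = 3 * m)
    (hrec : ∀ n, m ≤ n → c n = c (n - 1) + Nat.gcd n (c (n - 1))) :
    ∀ n, m ≤ n → c n - c (n - 1) = 1 ∨ Nat.Prime (c n - c (n - 1)) := by
  have hcm : c m = 3 * m := by rw [hrec m le_rfl, hinit, hsum]
  intro n hn
  rw [hrec n hn, Nat.add_sub_cancel_left]
  rcases hn.eq_or_lt with rfl | hlt
  · exact Or.inr (hinit ▸ hp)
  · obtain ⟨s, k, hsk, hrun⟩ := exists_rowlandRun hm hcm hrec (n - 1) (by omega)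
    obtain rfl : n = s + k + 1 := by omega
    simpa using hrun.gcd_eq_one_or_prime
end

section
/- Let m ≥ 4 and let c(m-1) = t be such that p := gcd(m, t) is prime and t + p = 2m. Define c(n) = c(n-1) + gcd(n, c(n-1)) for n ≥ m. Then for every n ≥ m, the difference c(n) - c(n-1) is either 1 or a prime. -/
/-!
After a term with `c (k + 1) = 2 * (k + 1)`, write `c n = (n + 1) + k`; then
`gcd (n + 1) (c n) = gcd (n + 1 - k) k`. As `n` grows, `n + 1 - k` runs through
`2, 3, …`, so the increments are `1` until `n + 1 - k` first reaches the least prime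
factor `q` of `k`. There the increment is `q`, and `c (n + 1) = 2 * (n + 1)` again.
The hypotheses on `m` and `t` say exactly that `c m = 2 * m` with increment `gcd m t`.
-/

namespace Rowland

/-- `n` lies in the run of increments `1` that follows a term `c (k + 1) = 2 * (k + 1)`;
the run ends with the jump at index `k + minFac k`. -/
def InRun (c : ℕ → ℕ) (k n : ℕ) : Prop :=
  k < n ∧ n < k + Nat.minFac k ∧ c n = n + k + 1

variable {c : ℕ → ℕ} {k n : ℕ}

theorem inRun_self_succ (hk : k ≠ 1) (h : c (k + 1) = 2 * (k + 1)) : InRun c k (k + 1) :=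
  ⟨k.lt_succ_self, by have := (Nat.minFac_prime hk).two_le; omega, by omega⟩

theorem InRun.succ (hk : 2 ≤ k) (h : InRun c k n)
    (hrec : c (n + 1) = c n + Nat.gcd (n + 1) (c n)) :
    (c (n + 1) = c n + 1 ∧ InRun c k (n + 1)) ∨
      (c (n + 1) = c n + Nat.minFac k ∧ InRun c n (n + 1)) := by
  obtain ⟨hkn, hnq, hc⟩ := h
  set j := n + 1 - k with hj
  have hgcd : Nat.gcd (n + 1) (c n) = Nat.gcd j k := by
    rw [show c n = k + (n + 1) by omega, Nat.gcd_add_self_right,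
      show n + 1 = j + k by omega, Nat.gcd_add_self_left]
  rcases (show j < Nat.minFac k ∨ j = Nat.minFac k by omega) with hlt | heq
  · have hcop : Nat.gcd j k = 1 := (Nat.coprime_of_lt_minFac (by omega) hlt).symm
    left
    exact ⟨by rw [hrec, hgcd, hcop], by omega, by omega, by omega⟩
  · have hjump : c (n + 1) = c n + Nat.minFac k := by
      rw [hrec, hgcd, heq, Nat.gcd_eq_left (Nat.minFac_dvd k)]
    right
    exact ⟨hjump, inRun_self_succ (by omega) (by omega)⟩

theorem exists_inRun_of_le {N : ℕ} (hk : 2 ≤ k) (hstart : InRun c k N)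
    (hrec : ∀ n, N < n → c n = c (n - 1) + Nat.gcd n (c (n - 1))) :
    ∀ n, N ≤ n → ∃ k', 2 ≤ k' ∧ InRun c k' n := by
  intro n hn
  induction n, hn using Nat.le_induction with
  | base => exact ⟨k, hk, hstart⟩
  | succ n hn ih =>
    obtain ⟨k', hk', hrun⟩ := ih
    rcases hrun.succ hk' (hrec (n + 1) (by omega)) with ⟨-, hrun'⟩ | ⟨-, hrun'⟩
    · exact ⟨k', hk', hrun'⟩
    · exact ⟨n, by have := hrun.1; omega, hrun'⟩

theorem sub_pred_eq_one_or_prime {N : ℕ} (hk : 2 ≤ k) (hstart : InRun c k N)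
    (hrec : ∀ n, N < n → c n = c (n - 1) + Nat.gcd n (c (n - 1))) {n : ℕ} (hn : N < n) :
    c n - c (n - 1) = 1 ∨ Nat.Prime (c n - c (n - 1)) := by
  obtain ⟨n, rfl⟩ : ∃ n', n = n' + 1 := ⟨n - 1, by omega⟩
  obtain ⟨k', hk', hrun⟩ := exists_inRun_of_le hk hstart hrec n (by omega)
  rw [Nat.add_sub_cancel]
  rcases hrun.succ hk' (hrec (n + 1) hn) with ⟨hstep, -⟩ | ⟨hstep, -⟩
  · left; omega
  · right; rw [hstep, Nat.add_sub_cancel_left]; exact Nat.minFac_prime (by omega)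

end Rowland

open Rowland

theorem rowland_2m (m t : ℕ) (c : ℕ → ℕ) (hm : 4 ≤ m)
    (hinit : c (m - 1) = t)
    (hp : Nat.Prime (Nat.gcd m t))
    (hsum : t + Nat.gcd m t = 2 * m)
    (hrec : ∀ n, m ≤ n → c n = c (n - 1) + Nat.gcd n (c (n - 1))) :
    ∀ n, m ≤ n → c n - c (n - 1) = 1 ∨ Nat.Prime (c n - c (n - 1)) := by
  have hcm : c m = 2 * m := by rw [hrec m le_rfl, hinit, hsum]
  have hstart : InRun c (m - 1) m := by
    obtain ⟨k, rfl⟩ : ∃ k, m = k + 1 := ⟨m - 1, by omega⟩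
    exact inRun_self_succ (by omega) hcm
  intro n hn
  rcases hn.eq_or_lt with rfl | hlt
  · right
    rwa [hcm, hinit, show 2 * m - t = Nat.gcd m t by omega]
  · exact sub_pred_eq_one_or_prime (by omega) hstart (fun k hk => hrec k hk.le) hlt
end

section
/- Let c satisfy c(n) = c(n-1) + gcd(n, c(n-1)) and define h(n) = c(n) - c(n-1). Suppose c(n₁) = 3·n₁ for some n₁ ≥ 2, and let n₂ be the smallest integer greater than n₁ with h(n₂) > 1. Then c(n₂) = 3·n₂ and h(n₂) is prime. -/
/-!
Between `n₁` and `n₂` every step is `1`, so `c (n - 1) = (2 n₁ - 1) + n` there and the step at `n`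
is `gcd n (2 n₁ - 1)`. Any prime `q` dividing `gcd n₂ (2 n₁ - 1)` is odd and divides
`n₁ + (q - 1) / 2`, which lies in `(n₁, n₂]`; minimality of `n₂` forces `q = 2 n₂ - (2 n₁ - 1)`.
Since that gcd also divides `2 n₂ - (2 n₁ - 1)`, it equals this prime, and then
`c n₂ = (2 n₁ - 1) + n₂ + (2 n₂ - 2 n₁ + 1) = 3 n₂`.
-/

theorem gcd_two_mul_sub_one_eq_prime_of_forall_coprime (n₁ m : ℕ) (hn₁ : 1 ≤ n₁) (hm : n₁ < m)
    (hcop : ∀ n, n₁ < n → n < m → Nat.Coprime n (2 * n₁ - 1))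
    (hg : Nat.gcd m (2 * n₁ - 1) ≠ 1) :
    Nat.gcd m (2 * n₁ - 1) = 2 * (m - n₁) + 1 ∧ (2 * (m - n₁) + 1).Prime := by
  set g := Nat.gcd m (2 * n₁ - 1)
  have hgk : g ∣ 2 * (m - n₁) + 1 := by
    have h := Nat.dvd_sub ((Nat.gcd_dvd_left _ _).mul_left 2) (Nat.gcd_dvd_right m (2 * n₁ - 1))
    rwa [show 2 * m - (2 * n₁ - 1) = 2 * (m - n₁) + 1 by omega] at h
  set q := g.minFac
  have hq : q.Prime := Nat.minFac_prime hg
  have hqg : q ∣ g := Nat.minFac_dvd g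
  have hqd : q ∣ 2 * n₁ - 1 := hqg.trans (Nat.gcd_dvd_right _ _)
  have hq_odd : q % 2 = 1 := by
    have h2 : ¬ 2 ∣ q := fun h => by have := h.trans hqd; omega
    omega
  have hq_le : q ≤ 2 * (m - n₁) + 1 := Nat.le_of_dvd (by omega) (hqg.trans hgk)
  -- `n` is the unique integer with `2 n = (2 n₁ - 1) + q`, so `q ∣ n`.
  set n := n₁ + (q - 1) / 2
  have hqn : q ∣ n := by
    have h2n : q ∣ 2 * n := by
      rw [show 2 * n = (2 * n₁ - 1) + q by omega]
      exact dvd_add hqd dvd_rfl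
    exact Nat.Coprime.dvd_of_dvd_mul_left ((Nat.coprime_primes hq Nat.prime_two).mpr (by omega)) h2n
  have hnm : n = m := by
    by_contra hne
    have h1 := Nat.dvd_gcd hqn hqd
    rw [hcop n (by have := hq.two_le; omega) (by omega)] at h1
    exact hq.ne_one (Nat.eq_one_of_dvd_one h1)
  have hqk : q = 2 * (m - n₁) + 1 := by omega
  rw [← hqk]
  exact ⟨Nat.dvd_antisymm (hqk ▸ hgk) hqg, hq⟩

theorem eq_add_sub_of_forall_lt_of_forall_sub_le_one (c : ℕ → ℕ) (a N : ℕ)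
    (hlt : ∀ n, a < n → n < N → c (n - 1) < c n)
    (hle : ∀ n, a < n → n < N → ¬ c n - c (n - 1) > 1) :
    ∀ n, a ≤ n → n < N → c n = c a + (n - a) := by
  intro n han
  induction n, han using Nat.le_induction with
  | base => intro; simp
  | succ n han ih =>
    intro hn
    have h1 := hlt (n + 1) (by omega) hn
    have h2 := hle (n + 1) (by omega) hn
    simp only [Nat.add_sub_cancel] at h1 h2
    have := ih (by omega)
    omega

theorem rowland_lemma (c : ℕ → ℕ) (n₁ n₂ : ℕ) (hn₁ : 2 ≤ n₁)
    (hc₁ : c n₁ = 3 * n₁)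
    (hrec : ∀ n, n₁ < n → c n = c (n - 1) + Nat.gcd n (c (n - 1)))
    (hn₂ : n₁ < n₂)
    (hbig : c n₂ - c (n₂ - 1) > 1)
    (hleast : ∀ n, n₁ < n → n < n₂ → ¬ (c n - c (n - 1) > 1)) :
    c n₂ = 3 * n₂ ∧ Nat.Prime (c n₂ - c (n₂ - 1)) := by
  have hlin : ∀ n, n₁ ≤ n → n < n₂ → c n = 3 * n₁ + (n - n₁) := by
    intro n h1 h2
    rw [← hc₁]
    refine eq_add_sub_of_forall_lt_of_forall_sub_le_one c n₁ n₂ (fun k hk _ => ?_) hleast n h1 h2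
    rw [hrec k hk]
    have := Nat.gcd_pos_of_pos_left (c (k - 1)) (show 0 < k by omega)
    omega
  have hstep : ∀ n, n₁ < n → n ≤ n₂ → c n - c (n - 1) = Nat.gcd n (2 * n₁ - 1) := by
    intro n h1 h2
    rw [hrec n h1, Nat.add_sub_cancel_left, hlin (n - 1) (by omega) (by omega),
      show 3 * n₁ + (n - 1 - n₁) = (2 * n₁ - 1) + n by omega, Nat.gcd_add_self_right]
  have hcop : ∀ n, n₁ < n → n < n₂ → Nat.Coprime n (2 * n₁ - 1) := by
    intro n h1 h2
    have hle := hleast n h1 h2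
    have hpos := Nat.gcd_pos_of_pos_left (2 * n₁ - 1) (show 0 < n by omega)
    rw [hstep n h1 h2.le] at hle
    exact (show Nat.gcd n (2 * n₁ - 1) = 1 by omega)
  obtain ⟨hgcd, hprime⟩ := gcd_two_mul_sub_one_eq_prime_of_forall_coprime n₁ n₂ (by omega) hn₂
    hcop (by rw [← hstep n₂ hn₂ le_rfl]; omega)
  rw [hstep n₂ hn₂ le_rfl, hgcd]
  refine ⟨?_, hprime⟩
  have hc₂ := hstep n₂ hn₂ le_rfl
  have hc₂' := hlin (n₂ - 1) (by omega) (by omega)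
  omega
end

section
/- For the Rowland sequence a(1) = 7, a(n) = a(n-1) + gcd(n, a(n-1)), and the sequence c₂ defined by c₂(1) = 4 and c₂(n) = c₂(n-1) + gcd(n, c₂(n-1)), one has a(n) = c₂(n) for all n ≥ 3. -/
/-! Both sequences reach 9 at `n = 3` (`a`: 7, 8, 9 and `c₂`: 4, 6, 9), and from then on they
obey the same recurrence. -/

theorem eq_of_le_of_eq_of_recurrence {a c : ℕ → ℕ} (f : ℕ → ℕ → ℕ) {m : ℕ}
    (ha : ∀ n, m < n → a n = f n (a (n - 1))) (hc : ∀ n, m < n → c n = f n (c (n - 1)))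
    (hm : a m = c m) : ∀ n, m ≤ n → a n = c n := by
  intro n hn
  induction n, hn using Nat.le_induction with
  | base => exact hm
  | succ k hk ih =>
    rw [ha (k + 1) (Nat.lt_succ_of_le hk), hc (k + 1) (Nat.lt_succ_of_le hk),
      Nat.add_sub_cancel, ih]

theorem rowland_eq_c2 (a c : ℕ → ℕ)
    (ha1 : a 1 = 7)
    (harec : ∀ n, 2 ≤ n → a n = a (n - 1) + Nat.gcd n (a (n - 1)))
    (hc1 : c 1 = 4)
    (hcrec : ∀ n, 2 ≤ n → c n = c (n - 1) + Nat.gcd n (c (n - 1))) :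
    ∀ n, 3 ≤ n → a n = c n := by
  have ha3 : a 3 = 9 := by
    rw [harec 3 (by norm_num), harec 2 (by norm_num)]
    norm_num [ha1]
  have hc3 : c 3 = 9 := by
    rw [hcrec 3 (by norm_num), hcrec 2 (by norm_num)]
    norm_num [hc1]
  exact eq_of_le_of_eq_of_recurrence (fun n x => x + Nat.gcd n x)
    (fun n hn => harec n (by omega)) (fun n hn => hcrec n (by omega)) (ha3.trans hc3.symm)
end

section
/- If c(n) = c(n-1) + gcd(n, c(n-1)) and c(n-1) = 3(n-1), then gcd(n, c(n-1)) = gcd(n, 3(n-1)) = gcd(n, 3) ∈ {1, 3}, and hence the difference c(n) - c(n-1) is 1 or 3 (both 1 or prime). -/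
theorem Nat.gcd_mul_sub_one_right {n : ℕ} (hn : 1 ≤ n) (k : ℕ) :
    Nat.gcd n (k * (n - 1)) = Nat.gcd n k :=
  Nat.Coprime.gcd_mul_right_cancel_right k
    ((Nat.coprime_self_sub_left hn).mpr (Nat.coprime_one_left n))

theorem step_after_3_n_sub_1 (c : ℕ → ℕ) (n : ℕ) (hn : 2 ≤ n)
    (hval : c (n - 1) = 3 * (n - 1))
    (hrec : c n = c (n - 1) + Nat.gcd n (c (n - 1))) :
    Nat.gcd n (c (n - 1)) = Nat.gcd n 3 ∧
      (Nat.gcd n 3 = 1 ∨ Nat.gcd n 3 = 3) ∧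
      (c n - c (n - 1) = 1 ∨ Nat.Prime (c n - c (n - 1))) := by
  have hgcd : Nat.gcd n (c (n - 1)) = Nat.gcd n 3 := by
    rw [hval, Nat.gcd_mul_sub_one_right (by omega)]
  have hdichotomy : Nat.gcd n 3 = 1 ∨ Nat.gcd n 3 = 3 :=
    Nat.prime_three.eq_one_or_self_of_dvd _ (Nat.gcd_dvd_right n 3)
  have hstep : c n - c (n - 1) = Nat.gcd n 3 := by omega
  refine ⟨hgcd, hdichotomy, ?_⟩
  rw [hstep]
  rcases hdichotomy with h1 | h3
  · exact .inl h1
  · exact .inr (h3.symm ▸ Nat.prime_three)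
end

section
/- In the 3m-setting (c(n₁) = 3·n₁, c(n) = c(n-1) + gcd(n, c(n-1))), whenever a difference h(n) = c(n) - c(n-1) is greater than 1, the subsequent value again satisfies c(n) = 3n, so the invariant c(n) = 3n is restored at every prime step. -/
/-!
Write `c n = n + 2 k`, where `k ≤ n` is the last index with `c k = 3 k`. Then
`c n = (n + 1) + (2 k - 1)`, so the next increment is `gcd (n + 1) (2 k - 1)`. Any common divisor
`g > 1` of `n + 1` and `2 k - 1` is odd and divides `2 (n + 1) - (2 k - 1)`; if it were a proper
divisor, the index `k + (g - 1) / 2`, strictly between `k` and `n + 1`, would already share the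
factor `g` with `2 k - 1`. Hence the first nontrivial increment is exactly `2 (n + 1) - (2 k - 1)`,
which makes `c (n + 1) = 3 (n + 1)`.
-/

theorem Nat.gcd_eq_two_mul_sub_of_coprime_between {k N : ℕ} (hk : 1 ≤ k) (hkN : k < N)
    (hcop : ∀ j, k < j → j < N → Nat.Coprime j (2 * k - 1))
    (hg : Nat.gcd N (2 * k - 1) ≠ 1) :
    Nat.gcd N (2 * k - 1) = 2 * N - (2 * k - 1) := by
  set g := Nat.gcd N (2 * k - 1)
  have hgN : g ∣ N := Nat.gcd_dvd_left _ _
  have hgm : g ∣ 2 * k - 1 := Nat.gcd_dvd_right _ _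
  obtain ⟨t, ht⟩ : Odd g := (Nat.odd_iff.mpr (by omega) : Odd (2 * k - 1)).of_dvd_nat hgm
  have hg_le : g ≤ 2 * N - (2 * k - 1) :=
    Nat.le_of_dvd (by omega) (Nat.dvd_sub (hgN.mul_left 2) hgm)
  by_contra hne
  -- `2 * N - (2 * k - 1)` is odd as well, so `g` falls short of it by at least 2.
  have hg_dvd : g ∣ k + t := by
    have h2 : g ∣ 2 * (k + t) := by
      rw [show 2 * (k + t) = (2 * k - 1) + g by omega]
      exact Nat.dvd_add hgm dvd_rfl
    exact (Nat.coprime_two_right.mpr ⟨t, ht⟩).dvd_of_dvd_mul_left h2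
  have hone : g ∣ 1 := by
    rw [← hcop (k + t) (by omega) (by omega)]
    exact Nat.dvd_gcd hg_dvd hgm
  exact hg (Nat.eq_one_of_dvd_one hone)

/-- The state of the sequence at `n` since its last reset `c k = 3 k`. -/
def IsAnchor (c : ℕ → ℕ) (k n : ℕ) : Prop :=
  c n = n + 2 * k ∧ ∀ j, k < j → j ≤ n → Nat.Coprime j (2 * k - 1)

theorem isAnchor_self {c : ℕ → ℕ} {k : ℕ} (hk : c k = 3 * k) : IsAnchor c k k :=
  ⟨by omega, fun _ h₁ h₂ => absurd h₂ (by omega)⟩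

theorem IsAnchor.succ {c : ℕ → ℕ} {k n : ℕ} (h : IsAnchor c k n) (hk : 1 ≤ k) (hkn : k ≤ n)
    (hrec : c (n + 1) = c n + Nat.gcd (n + 1) (c n)) :
    (IsAnchor c k (n + 1) ∧ c (n + 1) = c n + 1) ∨ c (n + 1) = 3 * (n + 1) := by
  obtain ⟨hcn, hcop⟩ := h
  have hgcd : Nat.gcd (n + 1) (c n) = Nat.gcd (n + 1) (2 * k - 1) := by
    rw [hcn, show n + 2 * k = (2 * k - 1) + (n + 1) by omega, Nat.gcd_add_self_right]
  by_cases hg : Nat.gcd (n + 1) (2 * k - 1) = 1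
  · refine Or.inl ⟨⟨by omega, fun j hkj hjn => ?_⟩, by omega⟩
    rcases Nat.lt_or_eq_of_le hjn with hj | rfl
    · exact hcop j hkj (by omega)
    · exact hg
  · have := Nat.gcd_eq_two_mul_sub_of_coprime_between hk (by omega)
      (fun j hkj hjn => hcop j hkj (by omega)) hg
    right
    omega

theorem exists_isAnchor {c : ℕ → ℕ} {n₁ : ℕ} (hn₁ : 1 ≤ n₁) (hc₁ : c n₁ = 3 * n₁)
    (hrec : ∀ n, n₁ < n → c n = c (n - 1) + Nat.gcd n (c (n - 1))) :
    ∀ n, n₁ ≤ n → ∃ k, n₁ ≤ k ∧ k ≤ n ∧ IsAnchor c k n := by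
  intro n hn
  induction n, hn using Nat.le_induction with
  | base => exact ⟨n₁, le_rfl, le_rfl, isAnchor_self hc₁⟩
  | succ n hn ih =>
    obtain ⟨k, hk₁, hkn, hanchor⟩ := ih
    rcases hanchor.succ (by omega) hkn (hrec (n + 1) (by omega)) with ⟨hnext, -⟩ | hreset
    · exact ⟨k, hk₁, by omega, hnext⟩
    · exact ⟨n + 1, by omega, le_rfl, isAnchor_self hreset⟩

theorem invariant_restored (c : ℕ → ℕ) (n₁ : ℕ) (hn₁ : 2 ≤ n₁)
    (hc₁ : c n₁ = 3 * n₁)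
    (hrec : ∀ n, n₁ < n → c n = c (n - 1) + Nat.gcd n (c (n - 1))) :
    ∀ n, n₁ < n → c n - c (n - 1) > 1 → c n = 3 * n := by
  intro n hn hjump
  obtain ⟨m, rfl⟩ : ∃ m, n = m + 1 := ⟨n - 1, by omega⟩
  obtain ⟨k, hk₁, hkm, hanchor⟩ := exists_isAnchor (by omega) hc₁ hrec m (by omega)
  rcases hanchor.succ (by omega) hkm (hrec (m + 1) hn) with ⟨-, hstep⟩ | hreset
  · simp only [Nat.add_sub_cancel] at hjump
    omega
  · exact hreset
end

section
/- In the 2m-setting: if c satisfies c(n) = c(n-1) + gcd(n, c(n-1)) for n ≥ m, with m ≥ 4, gcd(m, c(m-1)) = p prime and c(m-1) + p = 2m, and n₂ > m is the smallest index with c(n₂) - c(n₂-1) > 1 (assuming c(n) = 2n holds at some index), then c(n₂) = 2·n₂ and c(n₂) - c(n₂-1) is prime. -/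
/-! Up to `n₂` the sequence increases by one at each step, so `c n = n + m` there and the increment at
`n` is `gcd(n, n - 1 + m) = gcd(n, m - 1)`. Hence `n₂` is the first `n > m` not coprime to `m - 1`;
if `r` is the least prime factor of `gcd(n₂, m - 1)`, then `r ∣ n₂ - (m - 1)` and `m - 1 + r` is itself
such an index, which forces `n₂ = m - 1 + r`, an increment of `r` and `c n₂ = 2 n₂`. -/

theorem Nat.gcd_eq_sub_and_prime_sub_of_minimal {k N : ℕ} (hN : k + 1 < N) (hgcd : 1 < N.gcd k)
    (hmin : ∀ n, k + 1 < n → n < N → n.gcd k ≤ 1) : N.gcd k = N - k ∧ (N - k).Prime := by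
  set r := (N.gcd k).minFac
  have hr : r.Prime := Nat.minFac_prime hgcd.ne'
  have hrN : r ∣ N := (Nat.minFac_dvd _).trans (Nat.gcd_dvd_left N k)
  have hrk : r ∣ k := (Nat.minFac_dvd _).trans (Nat.gcd_dvd_right N k)
  have hle : r ≤ N - k := Nat.le_of_dvd (by omega) (Nat.dvd_sub hrN hrk)
  have hge : N ≤ k + r := by
    by_contra! hlt
    have hgcd_r : (k + r).gcd k = r := by
      rw [Nat.gcd_self_add_left, Nat.gcd_eq_left hrk]
    have := hmin (k + r) (by linarith [hr.two_le]) hlt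
    linarith [hr.two_le]
  have hNk : N - k = r := by omega
  refine ⟨?_, hNk ▸ hr⟩
  rw [hNk]
  exact Nat.dvd_antisymm (hNk ▸ Nat.dvd_sub (Nat.gcd_dvd_left N k) (Nat.gcd_dvd_right N k))
    (Nat.minFac_dvd _)

theorem eq_add_sub_of_gcd_steps_le_one {c : ℕ → ℕ} {a b : ℕ}
    (hrec : ∀ n, a < n → n < b → c n = c (n - 1) + n.gcd (c (n - 1)))
    (hsmall : ∀ n, a < n → n < b → ¬ c n - c (n - 1) > 1) :
    ∀ n, a ≤ n → n < b → c n = c a + (n - a) := by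
  intro n han
  induction n, han using Nat.le_induction with
  | base => simp
  | succ n han ih =>
    intro hnb
    have hstep := hrec (n + 1) (by omega) hnb
    have hpos : 0 < (n + 1).gcd (c n) := Nat.gcd_pos_of_pos_left _ n.succ_pos
    have hle := hsmall (n + 1) (by omega) hnb
    simp only [Nat.add_sub_cancel] at hstep hle
    have := ih (by omega)
    omega

theorem rowland_2m_lemma_general (c : ℕ → ℕ) (m n₂ : ℕ) (hm : 4 ≤ m)
    (hrec : ∀ n, m ≤ n → c n = c (n - 1) + Nat.gcd n (c (n - 1)))
    (hsum : c (m - 1) + Nat.gcd m (c (m - 1)) = 2 * m)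
    (hn₂ : m < n₂)
    (hbig : c n₂ - c (n₂ - 1) > 1)
    (hleast : ∀ n, m < n → n < n₂ → ¬ (c n - c (n - 1) > 1)) :
    c n₂ = 2 * n₂ ∧ Nat.Prime (c n₂ - c (n₂ - 1)) := by
  have hcm : c m = 2 * m := (hrec m le_rfl).trans hsum
  have hlin : ∀ n, m ≤ n → n < n₂ → c n = n + m := fun n h₁ h₂ => by
    rw [eq_add_sub_of_gcd_steps_le_one (fun n h _ => hrec n h.le) hleast n h₁ h₂, hcm]
    omega
  have hstep : ∀ n, m < n → n ≤ n₂ → c n - c (n - 1) = n.gcd (m - 1) := fun n h₁ h₂ => by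
    rw [hrec n h₁.le, hlin (n - 1) (by omega) (by omega), Nat.add_sub_cancel_left,
      show n - 1 + m = m - 1 + n by omega, Nat.gcd_add_self_right]
  have hstep₂ := hstep n₂ hn₂ le_rfl
  obtain ⟨hgcd, hprime⟩ := Nat.gcd_eq_sub_and_prime_sub_of_minimal (k := m - 1) (N := n₂)
    (by omega) (hstep₂ ▸ hbig)
    (fun n h₁ h₂ => hstep n (by omega) h₂.le ▸ not_lt.mp (hleast n (by omega) h₂))
  have hjump : c n₂ - c (n₂ - 1) = n₂ - (m - 1) := hstep₂.trans hgcd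
  refine ⟨?_, hjump ▸ hprime⟩
  have := hlin (n₂ - 1) (by omega) (by omega)
  omega

theorem rowland_2m_lemma (c : ℕ → ℕ) (m n₂ : ℕ) (hm : 4 ≤ m)
    (hrec : ∀ n, m ≤ n → c n = c (n - 1) + Nat.gcd n (c (n - 1)))
    (hp : Nat.Prime (Nat.gcd m (c (m - 1))))
    (hsum : c (m - 1) + Nat.gcd m (c (m - 1)) = 2 * m)
    (hn₂ : m < n₂)
    (hbig : c n₂ - c (n₂ - 1) > 1)
    (hleast : ∀ n, m < n → n < n₂ → ¬ (c n - c (n - 1) > 1)) :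
    c n₂ = 2 * n₂ ∧ Nat.Prime (c n₂ - c (n₂ - 1)) :=
  rowland_2m_lemma_general c m n₂ hm hrec hsum hn₂ hbig hleast
end
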